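/- arXiv:2505.00682 — 7 statements merged into one kernel-verified Lean document; each statement's English description precedes it below -/
import Mathlib

section
/- Let G : 𝒜 ⥤ 𝒳 be a functor. Then there is a functor T : Arrow (Comma (𝟭 𝒳) G) ⥤ Comma (𝟭 𝒳) G which sends an arrow φ : (X₁, f₁, A₁) ⟶ (X₂, f₂, A₂) of the comma category, with components x : X₁ ⟶ X₂ and a : A₁ ⟶ A₂, to the comma object (X₁, f₂ ∘ x, A₂) (equivalently (X₁, G(a) ∘ f₁, A₂)), and which sends a morphism of arrows given by comma morphisms (h, m) between the domains and (k, n) between the codomains to the 'diagonal' comma morphism (h, n). Moreover, the composite of the functor Comma (𝟭 𝒳) G ⥤ Arrow (Comma (𝟭 𝒳) G), c ↦ 𝟙_c (with a morphism u sent to the square (u, u)), followed by T, is the identity functor of Comma (𝟭 𝒳) G. (This is the functor D(δ_G) and a counit law from Theorems 'Rightcomma' and 'comma2comonad'.) -/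
open CategoryTheory

universe v₁ v₂ u₁ u₂

variable {𝒜 : Type u₁} {𝒳 : Type u₂} [Category.{v₁} 𝒜] [Category.{v₂} 𝒳]

/-- Object part of the functor `D(δ_G)`: an arrow of the comma category is sent to its
"diagonal" comma object. -/
def TObj (G : 𝒜 ⥤ 𝒳) (φ : Arrow (Comma (𝟭 𝒳) G)) : Comma (𝟭 𝒳) G :=
  ⟨φ.left.left, φ.right.right, φ.hom.left ≫ φ.right.hom⟩

/-- Morphism part of the functor `D(δ_G)`: the "diagonal" comma morphism `(h, n)`. -/
def TMap (G : 𝒜 ⥤ 𝒳) {φ ψ : Arrow (Comma (𝟭 𝒳) G)} (u : φ ⟶ ψ) :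
    TObj G φ ⟶ TObj G ψ where
  left := u.left.left
  right := u.right.right
  w := by
    have h1 := congrArg CommaMorphism.left u.w
    have h2 := u.right.w
    dsimp [TObj] at h1 h2 ⊢
    rw [← Category.assoc, h1, Category.assoc, h2]
    simp only [Category.assoc]

/-- The functor sending an object `c` to the identity arrow `𝟙 c`, and a morphism `u`
to the commutative square `(u, u)`. -/
def diagArrow (𝒞 : Type*) [Category 𝒞] : 𝒞 ⥤ Arrow 𝒞 where
  obj c := Arrow.mk (𝟙 c)
  map u := { left := u, right := u }

/-- The functor `D(δ_G)`. -/
def TFun (G : 𝒜 ⥤ 𝒳) : Arrow (Comma (𝟭 𝒳) G) ⥤ Comma (𝟭 𝒳) G where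
  obj := TObj G
  map := TMap G
  map_id φ := by
    apply CommaMorphism.ext <;> rfl
  map_comp u v := by
    apply CommaMorphism.ext <;> rfl

/-- The functor `D(δ_G) : Arrow (Comma (𝟭 𝒳) G) ⥤ Comma (𝟭 𝒳) G` together with the counit
law: composing the identity-arrow functor with it gives the identity functor. -/
theorem commaD_delta (G : 𝒜 ⥤ 𝒳) :
    ∃ T : Arrow (Comma (𝟭 𝒳) G) ⥤ Comma (𝟭 𝒳) G,
      (∃ hobj : ∀ φ : Arrow (Comma (𝟭 𝒳) G), T.obj φ = TObj G φ,
        ∀ {φ ψ : Arrow (Comma (𝟭 𝒳) G)} (u : φ ⟶ ψ),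
          T.map u = eqToHom (hobj φ) ≫ TMap G u ≫ eqToHom (hobj ψ).symm) ∧
      diagArrow (Comma (𝟭 𝒳) G) ⋙ T = 𝟭 (Comma (𝟭 𝒳) G) := by
  refine ⟨TFun G, ⟨fun _ => rfl, fun u => by simp [TFun]; exact (Category.id_comp _).symm⟩, ?_⟩
  apply CategoryTheory.Functor.ext
  · intro c c' u
    apply CommaMorphism.ext <;> simp [TFun, TMap, diagArrow, eqToHom_map]
    · erw [Comma.eqToHom_left, Comma.eqToHom_left, eqToHom_refl, eqToHom_refl, Category.id_comp, Category.comp_id]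
    · erw [Comma.eqToHom_right, Comma.eqToHom_right, eqToHom_refl, eqToHom_refl, Category.id_comp, Category.comp_id]
  · intro c
    dsimp [TFun, TObj, diagArrow]
    cases c
    simp
end

section
/- Given a colax coalgebra datum for the comma 2-comonad on G : 𝒜 ⥤ 𝒳, there is a lifting of K to the coKleisli categories: the assignment sending an object X of the coKleisli category of the comonad (C, θ¹⁰⁰, ζ¹) to K(X), and sending a coKleisli morphism f : C(X) ⟶ Y to the coKleisli morphism ζ⁰_{K Y} ∘ Q(K(f)) ∘ Q(θ¹¹⁰_X) : Q(K(X)) ⟶ K(Y) of the comonad (Q, θ⁰¹¹, ζ⁰), is a functor from the coKleisli category of (C, θ¹⁰⁰, ζ¹) to the coKleisli category of (Q, θ⁰¹¹, ζ⁰). -/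
open CategoryTheory

universe v₁ v₂ u₁ u₂

variable {𝒜 : Type u₁} {𝒳 : Type u₂} [Category.{v₁} 𝒜] [Category.{v₂} 𝒳]

/-- A colax coalgebra datum for the comma 2-comonad on `G : 𝒜 ⥤ 𝒳`, consisting of the
functors `C, K, H, Q`, the structural natural transformations, and the component
equations (1)–(38) extracted in the paper. -/
structure ColaxDatum (G : 𝒜 ⥤ 𝒳) where
  C : 𝒳 ⥤ 𝒳
  K : 𝒳 ⥤ 𝒜
  H : 𝒜 ⥤ 𝒳
  Q : 𝒜 ⥤ 𝒜
  η : C ⟶ K ⋙ G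
  χ : H ⟶ Q ⋙ G
  ω : G ⋙ C ⟶ H
  ε : G ⋙ K ⟶ Q
  ζ1 : C ⟶ 𝟭 𝒳
  ζ0 : Q ⟶ 𝟭 𝒜
  θ100 : C ⟶ C ⋙ C
  θ101 : C ⟶ K ⋙ H
  θ110 : K ⟶ C ⋙ K
  θ111 : K ⟶ K ⋙ Q
  θ000 : H ⟶ H ⋙ C
  θ001 : H ⟶ Q ⋙ H
  θ010 : Q ⟶ H ⋙ K
  θ011 : Q ⟶ Q ⋙ Q
  eq1 : ∀ A : 𝒜, ω.app A ≫ χ.app A = η.app (G.obj A) ≫ G.map (ε.app A)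
  eq2 : ∀ A : 𝒜, ω.app A ≫ χ.app A ≫ G.map (ζ0.app A) = ζ1.app (G.obj A)
  eq3 : ∀ X : 𝒳, θ100.app X ≫ η.app (C.obj X) = η.app X ≫ G.map (θ110.app X)
  eq4 : ∀ X : 𝒳, θ101.app X ≫ χ.app (K.obj X) = η.app X ≫ G.map (θ111.app X)
  eq5 : ∀ X : 𝒳, θ101.app X = θ100.app X ≫ C.map (η.app X) ≫ ω.app (K.obj X)
  eq6 : ∀ X : 𝒳, θ111.app X = θ110.app X ≫ K.map (η.app X) ≫ ε.app (K.obj X)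
  eq7 : ∀ A : 𝒜, θ000.app A ≫ η.app (H.obj A) = χ.app A ≫ G.map (θ010.app A)
  eq8 : ∀ A : 𝒜, θ001.app A ≫ χ.app (Q.obj A) = χ.app A ≫ G.map (θ011.app A)
  eq9 : ∀ A : 𝒜, θ001.app A = θ000.app A ≫ C.map (χ.app A) ≫ ω.app (Q.obj A)
  eq10 : ∀ A : 𝒜, θ011.app A = θ010.app A ≫ K.map (χ.app A) ≫ ε.app (Q.obj A)
  eq11 : ∀ A : 𝒜, θ100.app (G.obj A) ≫ C.map (ω.app A) = ω.app A ≫ θ000.app A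
  eq12 : ∀ A : 𝒜, θ110.app (G.obj A) ≫ K.map (ω.app A) = ε.app A ≫ θ010.app A
  eq13 : ∀ A : 𝒜, θ101.app (G.obj A) ≫ H.map (ε.app A) = ω.app A ≫ θ001.app A
  eq14 : ∀ A : 𝒜, θ111.app (G.obj A) ≫ Q.map (ε.app A) = ε.app A ≫ θ011.app A
  eq15 : ∀ X : 𝒳, θ100.app X ≫ C.map (ζ1.app X) = 𝟙 (C.obj X)
  eq16 : ∀ X : 𝒳, θ110.app X ≫ K.map (ζ1.app X) = 𝟙 (K.obj X)
  eq17 : ∀ A : 𝒜, θ001.app A ≫ H.map (ζ0.app A) = 𝟙 (H.obj A)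
  eq18 : ∀ A : 𝒜, θ011.app A ≫ Q.map (ζ0.app A) = 𝟙 (Q.obj A)
  eq19 : ∀ X : 𝒳, θ100.app X ≫ ζ1.app (C.obj X) = 𝟙 (C.obj X)
  eq20 : ∀ X : 𝒳, θ111.app X ≫ ζ0.app (K.obj X) = 𝟙 (K.obj X)
  eq21 : ∀ A : 𝒜, θ000.app A ≫ ζ1.app (H.obj A) = 𝟙 (H.obj A)
  eq22 : ∀ A : 𝒜, θ011.app A ≫ ζ0.app (Q.obj A) = 𝟙 (Q.obj A)
  eq23 : ∀ X : 𝒳, θ100.app X ≫ C.map (θ100.app X) = θ100.app X ≫ θ100.app (C.obj X)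
  eq24 : ∀ X : 𝒳, θ100.app X ≫ C.map (θ101.app X) = θ101.app X ≫ θ000.app (K.obj X)
  eq25 : ∀ X : 𝒳, θ101.app X ≫ H.map (θ110.app X) = θ100.app X ≫ θ101.app (C.obj X)
  eq26 : ∀ X : 𝒳, θ101.app X ≫ H.map (θ111.app X) = θ101.app X ≫ θ001.app (K.obj X)
  eq27 : ∀ X : 𝒳, θ111.app X ≫ Q.map (θ110.app X) = θ110.app X ≫ θ111.app (C.obj X)
  eq28 : ∀ X : 𝒳, θ111.app X ≫ Q.map (θ111.app X) = θ111.app X ≫ θ011.app (K.obj X)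
  eq29 : ∀ X : 𝒳, θ110.app X ≫ K.map (θ100.app X) = θ110.app X ≫ θ110.app (C.obj X)
  eq30 : ∀ X : 𝒳, θ110.app X ≫ K.map (θ101.app X) = θ111.app X ≫ θ010.app (K.obj X)
  eq31 : ∀ A : 𝒜, θ000.app A ≫ C.map (θ000.app A) = θ000.app A ≫ θ100.app (H.obj A)
  eq32 : ∀ A : 𝒜, θ000.app A ≫ C.map (θ001.app A) = θ001.app A ≫ θ000.app (Q.obj A)
  eq33 : ∀ A : 𝒜, θ001.app A ≫ H.map (θ010.app A) = θ000.app A ≫ θ101.app (H.obj A)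
  eq34 : ∀ A : 𝒜, θ001.app A ≫ H.map (θ011.app A) = θ001.app A ≫ θ001.app (Q.obj A)
  eq35 : ∀ A : 𝒜, θ011.app A ≫ Q.map (θ010.app A) = θ010.app A ≫ θ111.app (H.obj A)
  eq36 : ∀ A : 𝒜, θ011.app A ≫ Q.map (θ011.app A) = θ011.app A ≫ θ011.app (Q.obj A)
  eq37 : ∀ A : 𝒜, θ010.app A ≫ K.map (θ000.app A) = θ010.app A ≫ θ110.app (H.obj A)
  eq38 : ∀ A : 𝒜, θ010.app A ≫ K.map (θ001.app A) = θ011.app A ≫ θ010.app (Q.obj A)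

/-- The comonad `(C, θ¹⁰⁰, ζ¹)` on `𝒳` underlying a colax coalgebra datum. -/
def ColaxDatum.comonadC {G : 𝒜 ⥤ 𝒳} (d : ColaxDatum G) : Comonad 𝒳 where
  toFunctor := d.C
  ε := d.ζ1
  δ := d.θ100
  coassoc := d.eq23
  left_counit := d.eq19
  right_counit := d.eq15

/-- The comonad `(Q, θ⁰¹¹, ζ⁰)` on `𝒜` underlying a colax coalgebra datum. -/
def ColaxDatum.comonadQ {G : 𝒜 ⥤ 𝒳} (d : ColaxDatum G) : Comonad 𝒜 where
  toFunctor := d.Q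
  ε := d.ζ0
  δ := d.θ011
  coassoc := d.eq36
  left_counit := d.eq22
  right_counit := d.eq18

/-- Object part of the lifting of `K` to the coKleisli categories. -/
def liftObjK {G : 𝒜 ⥤ 𝒳} (d : ColaxDatum G) (X : Cokleisli d.comonadC) :
    Cokleisli d.comonadQ :=
  Cokleisli.mk d.comonadQ (d.K.obj X.of)

/-- Morphism part of the lifting of `K` to the coKleisli categories: a coKleisli morphism
`f : C X ⟶ Y` is sent to `ζ⁰_{K Y} ∘ Q (K f) ∘ Q (θ¹¹⁰_X) : Q (K X) ⟶ K Y`. -/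
def liftMapK {G : 𝒜 ⥤ 𝒳} (d : ColaxDatum G) {X Y : Cokleisli d.comonadC} (f : X ⟶ Y) :
    liftObjK d X ⟶ liftObjK d Y :=
  Cokleisli.Hom.mk (d.Q.map (d.θ110.app X.of) ≫ d.Q.map (d.K.map f.of) ≫ d.ζ0.app (d.K.obj Y.of) :
    d.Q.obj (d.K.obj X.of) ⟶ d.K.obj Y.of)



def liftFunctorK {G : 𝒜 ⥤ 𝒳} (d : ColaxDatum G) :
    Cokleisli d.comonadC ⥤ Cokleisli d.comonadQ where
  obj := liftObjK d
  map := liftMapK d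
  map_id X := by
    obtain ⟨X⟩ := X
    apply Cokleisli.hom_ext
    show d.Q.map (d.θ110.app X) ≫ d.Q.map (d.K.map (d.ζ1.app X)) ≫ d.ζ0.app (d.K.obj X)
        = d.ζ0.app (d.K.obj X)
    rw [← Category.assoc, ← d.Q.map_comp, d.eq16, d.Q.map_id, Category.id_comp]
  map_comp {X Y Z} f g := by
    obtain ⟨X⟩ := X; obtain ⟨Y⟩ := Y; obtain ⟨Z⟩ := Z; obtain ⟨f⟩ := f; obtain ⟨g⟩ := g
    change d.C.obj X ⟶ Y at f; change d.C.obj Y ⟶ Z at g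
    apply Cokleisli.hom_ext
    show d.Q.map (d.θ110.app X) ≫ d.Q.map (d.K.map (d.θ100.app X ≫ d.C.map f ≫ g)) ≫
          d.ζ0.app (d.K.obj Z)
        = d.θ011.app (d.K.obj X) ≫
            d.Q.map (d.Q.map (d.θ110.app X) ≫ d.Q.map (d.K.map f) ≫ d.ζ0.app (d.K.obj Y)) ≫
            (d.Q.map (d.θ110.app Y) ≫ d.Q.map (d.K.map g) ≫ d.ζ0.app (d.K.obj Z))
    have natθ110 : d.K.map f ≫ d.θ110.app Y = d.θ110.app (d.C.obj X) ≫ d.K.map (d.C.map f) :=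
      d.θ110.naturality f
    have h1 : d.θ110.app X ≫ d.K.map (d.θ100.app X ≫ d.C.map f ≫ g)
        = d.θ110.app X ≫ d.K.map f ≫ d.θ110.app Y ≫ d.K.map g := by
      simp only [Functor.map_comp, ← Category.assoc, d.eq29 X]
      simp only [Category.assoc]
      rw [← Category.assoc (d.θ110.app (d.C.obj X)) (d.K.map (d.C.map f)), ← natθ110]
      simp only [Category.assoc]
    have natζa : d.ζ0.app (d.K.obj Y) ≫ d.θ110.app Y
        = d.Q.map (d.θ110.app Y) ≫ d.ζ0.app (d.K.obj (d.C.obj Y)) :=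
      (d.ζ0.naturality _).symm
    have natζb : d.ζ0.app (d.K.obj (d.C.obj Y)) ≫ d.K.map g
        = d.Q.map (d.K.map g) ≫ d.ζ0.app (d.K.obj Z) :=
      (d.ζ0.naturality _).symm
    have nat011 : ∀ {a b : 𝒜} (m : a ⟶ b) {c : 𝒜} (h : d.Q.obj (d.Q.obj b) ⟶ c),
        d.θ011.app a ≫ d.Q.map (d.Q.map m) ≫ h = d.Q.map m ≫ d.θ011.app b ≫ h := by
      intro a b m c h
      rw [← Category.assoc, ← Category.assoc]
      congr 1
      exact (d.θ011.naturality m).symm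
    have eq18' : ∀ (A : 𝒜) {c : 𝒜} (h : d.Q.obj A ⟶ c),
        d.θ011.app A ≫ d.Q.map (d.ζ0.app A) ≫ h = h := by
      intro A c h
      rw [← Category.assoc, d.eq18, Category.id_comp]
    calc d.Q.map (d.θ110.app X) ≫ d.Q.map (d.K.map (d.θ100.app X ≫ d.C.map f ≫ g)) ≫
            d.ζ0.app (d.K.obj Z)
        = d.Q.map (d.θ110.app X ≫ d.K.map (d.θ100.app X ≫ d.C.map f ≫ g)) ≫
            d.ζ0.app (d.K.obj Z) := by rw [d.Q.map_comp, Category.assoc]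
      _ = d.Q.map (d.θ110.app X ≫ d.K.map f ≫ d.θ110.app Y ≫ d.K.map g) ≫
            d.ζ0.app (d.K.obj Z) := by rw [h1]
      _ = d.θ011.app (d.K.obj X) ≫
            d.Q.map (d.Q.map (d.θ110.app X) ≫ d.Q.map (d.K.map f) ≫ d.ζ0.app (d.K.obj Y)) ≫
            (d.Q.map (d.θ110.app Y) ≫ d.Q.map (d.K.map g) ≫ d.ζ0.app (d.K.obj Z)) := by
        simp only [Functor.map_comp, Category.assoc]
        rw [← Category.assoc (d.Q.map (d.ζ0.app (d.K.obj Y))), ← d.Q.map_comp, natζa]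
        rw [d.Q.map_comp]
        simp only [Category.assoc]
        rw [← Category.assoc (d.Q.map (d.ζ0.app (d.K.obj (d.C.obj Y)))), ← d.Q.map_comp, natζb]
        rw [d.Q.map_comp]
        simp only [Category.assoc]
        rw [nat011, nat011, nat011, nat011, eq18' (d.K.obj Z)]


/-- The lifting of `K` to the coKleisli categories is a functor
(Proposition `KKleisliliftingprop`). -/
theorem K_cokleisli_lifting (G : 𝒜 ⥤ 𝒳) (d : ColaxDatum G) :
    ∃ F : Cokleisli d.comonadC ⥤ Cokleisli d.comonadQ,
      ∃ hobj : ∀ X : Cokleisli d.comonadC, F.obj X = liftObjK d X,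
        ∀ {X Y : Cokleisli d.comonadC} (f : X ⟶ Y),
          F.map f = eqToHom (hobj X) ≫ liftMapK d f ≫ eqToHom (hobj Y).symm := by
  exact ⟨liftFunctorK d, fun _ => rfl, fun f => by simp [liftFunctorK]; exact (Category.id_comp (liftMapK d f)).symm⟩
end

section
/- Given a colax coalgebra datum for the comma 2-comonad on G : 𝒜 ⥤ 𝒳, there is a lifting of H to the coKleisli categories: the assignment sending an object A of the coKleisli category of the comonad (Q, θ⁰¹¹, ζ⁰) to H(A), and sending a coKleisli morphism a : Q(A) ⟶ B to the coKleisli morphism ζ¹_{H B} ∘ C(H(a)) ∘ C(θ⁰⁰¹_A) : C(H(A)) ⟶ H(B) of the comonad (C, θ¹⁰⁰, ζ¹), is a functor from the coKleisli category of (Q, θ⁰¹¹, ζ⁰) to the coKleisli category of (C, θ¹⁰⁰, ζ¹). -/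
open CategoryTheory

universe v₁ v₂ u₁ u₂

variable {𝒜 : Type u₁} {𝒳 : Type u₂} [Category.{v₁} 𝒜] [Category.{v₂} 𝒳]

/-- Object part of the lifting of `H` to the coKleisli categories. -/
def liftObjH {G : 𝒜 ⥤ 𝒳} (d : ColaxDatum G) (A : Cokleisli d.comonadQ) :
    Cokleisli d.comonadC :=
  Cokleisli.mk _ (d.H.obj A.of)

/-- Morphism part of the lifting of `H` to the coKleisli categories: a coKleisli morphism
`a : Q A ⟶ B` is sent to `ζ¹_{H B} ∘ C (H a) ∘ C (θ⁰⁰¹_A) : C (H A) ⟶ H B`. -/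
def liftMapH {G : 𝒜 ⥤ 𝒳} (d : ColaxDatum G) {A B : Cokleisli d.comonadQ} (a : A ⟶ B) :
    liftObjH d A ⟶ liftObjH d B :=
  Cokleisli.Hom.mk (d.C.map (d.θ001.app A.of) ≫ d.C.map (d.H.map a.of) ≫ d.ζ1.app (d.H.obj B.of) :
    d.C.obj (d.H.obj A.of) ⟶ d.H.obj B.of)

/-- The lifting of `H` to the coKleisli categories is a functor
(Proposition `HKleisliliftingprop`). -/
theorem H_cokleisli_lifting (G : 𝒜 ⥤ 𝒳) (d : ColaxDatum G) :
    ∃ F : Cokleisli d.comonadQ ⥤ Cokleisli d.comonadC,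
      ∃ hobj : ∀ A : Cokleisli d.comonadQ, F.obj A = liftObjH d A,
        ∀ {A B : Cokleisli d.comonadQ} (a : A ⟶ B),
          F.map a = eqToHom (hobj A) ≫ liftMapH d a ≫ eqToHom (hobj B).symm := by
  refine ⟨{ obj := fun A => liftObjH d A, map := fun a => liftMapH d a,
            map_id := ?_, map_comp := ?_ }, fun _ => rfl, fun a => by simp⟩
  · intro A
    apply Cokleisli.hom_ext
    show d.C.map (d.θ001.app A.of) ≫ d.C.map (d.H.map (d.ζ0.app A.of)) ≫ d.ζ1.app (d.H.obj A.of)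
      = d.ζ1.app (d.H.obj A.of)
    rw [← Category.assoc, ← d.C.map_comp, d.eq17, d.C.map_id, Category.id_comp]
  · intro A B B' a b
    apply Cokleisli.hom_ext
    show d.C.map (d.θ001.app A.of) ≫ d.C.map (d.H.map (d.θ011.app A.of ≫ d.Q.map a.of ≫ b.of))
        ≫ d.ζ1.app (d.H.obj B'.of) =
      d.θ100.app (d.H.obj A.of) ≫ d.C.map (d.C.map (d.θ001.app A.of) ≫ d.C.map (d.H.map a.of)
        ≫ d.ζ1.app (d.H.obj B.of)) ≫
        (d.C.map (d.θ001.app B.of) ≫ d.C.map (d.H.map b.of) ≫ d.ζ1.app (d.H.obj B'.of))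
    obtain ⟨f, hf⟩ : ∃ f : d.Q.obj A.of ⟶ B.of, a.of = f := ⟨a.of, rfl⟩
    obtain ⟨g, hg⟩ : ∃ g : d.Q.obj B.of ⟶ B'.of, b.of = g := ⟨b.of, rfl⟩
    rw [hf, hg]
    have zn : ∀ {X Y : 𝒳} (f : X ⟶ Y), d.C.map f ≫ d.ζ1.app Y = d.ζ1.app X ≫ f :=
      fun f => by simpa using d.ζ1.naturality f
    have zn' : ∀ {X Y Z : 𝒳} (f : X ⟶ Y) (h : Y ⟶ Z),
        d.C.map f ≫ d.ζ1.app Y ≫ h = d.ζ1.app X ≫ f ≫ h := by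
      intro X Y Z f h; rw [← Category.assoc, zn, Category.assoc]
    have e19' : ∀ (X : 𝒳) {Z : 𝒳} (h : d.C.obj X ⟶ Z),
        d.θ100.app X ≫ d.ζ1.app (d.C.obj X) ≫ h = h := by
      intro X Z h; rw [← Category.assoc, d.eq19, Category.id_comp]
    have key : d.θ001.app A.of ≫ d.H.map (d.θ011.app A.of) ≫ d.H.map (d.Q.map f) ≫ d.H.map g
        = d.θ001.app A.of ≫ d.H.map f ≫ d.θ001.app B.of ≫ d.H.map g := by
      rw [← Category.assoc (d.θ001.app A.of), d.eq34 A.of, Category.assoc]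
      congr 1
      rw [← Category.assoc, ← Category.assoc]
      congr 1
      simpa using (d.θ001.naturality f).symm
    have e15' : ∀ (X : 𝒳) {Z : 𝒳} (h : d.C.obj X ⟶ Z),
        d.θ100.app X ≫ d.C.map (d.ζ1.app X) ≫ h = h := by
      intro X Z h; rw [← Category.assoc, d.eq15, Category.id_comp]
    simp only [Functor.map_comp, Functor.comp_obj, Category.assoc, zn, zn', e19', key]
end

section
/- Let a split colax coalgebra datum for the comma 2-comonad on G : 𝒜 ⥤ 𝒳 be given. Then the components κ_X := ε_{K X} ∘ K(η_X) : K(C(X)) ⟶ Q(K(X)) define a natural transformation κ : C ⋙ K ⟶ K ⋙ Q which is a generalized distributive law from the comonad (C, θ¹⁰⁰, ζ¹) to the comonad (Q, θ⁰¹¹, ζ⁰), i.e., for every object X of 𝒳: (a) ζ⁰_{K X} ∘ κ_X = K(ζ¹_X), and (b) Q(κ_X) ∘ κ_{C X} ∘ K(θ¹⁰⁰_X) = θ⁰¹¹_{K X} ∘ κ_X. (Theorem 'kappadist'.) -/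
open CategoryTheory

universe v₁ v₂ u₁ u₂

variable {𝒜 : Type u₁} {𝒳 : Type u₂} [Category.{v₁} 𝒜] [Category.{v₂} 𝒳]

/-- Theorem `kappadist`: for a split colax coalgebra datum, the components
`κ_X := ε_{K X} ∘ K(η_X)` form a natural transformation `κ : C ⋙ K ⟶ K ⋙ Q` which is a
generalized distributive law from the comonad `(C, θ¹⁰⁰, ζ¹)` to the comonad
`(Q, θ⁰¹¹, ζ⁰)`. -/
theorem kappa_distributive_law (G : 𝒜 ⥤ 𝒳) (d : ColaxDatum G)
    (split1 : ∀ X : 𝒳, d.K.map (d.θ100.app X) = d.θ110.app (d.C.obj X))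
    (split2 : ∀ X : 𝒳,
      d.K.map (d.η.app X) ≫ d.ε.app (d.K.obj X) ≫ d.ζ0.app (d.K.obj X)
        = d.K.map (d.ζ1.app X)) :
    ∃ κ : d.C ⋙ d.K ⟶ d.K ⋙ d.Q,
      (∀ X : 𝒳, κ.app X = d.K.map (d.η.app X) ≫ d.ε.app (d.K.obj X)) ∧
      (∀ X : 𝒳, κ.app X ≫ d.ζ0.app (d.K.obj X) = d.K.map (d.ζ1.app X)) ∧
      (∀ X : 𝒳,
        d.K.map (d.θ100.app X) ≫ κ.app (d.C.obj X) ≫ d.Q.map (κ.app X)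
          = κ.app X ≫ d.θ011.app (d.K.obj X)) := by
  refine ⟨Functor.whiskerRight d.η d.K ≫ Functor.whiskerLeft d.K d.ε, fun X => rfl, ?_, ?_⟩
  · intro X
    simpa [Category.assoc] using split2 X
  · intro X
    have h6 := d.eq6 (d.C.obj X)
    have hnat := d.θ111.naturality (d.η.app X)
    have h14 := d.eq14 (d.K.obj X)
    simp only [NatTrans.comp_app, Functor.whiskerRight_app, Functor.whiskerLeft_app, Functor.comp_map,
      Functor.map_comp]
    rw [split1 X]
    calc d.θ110.app (d.C.obj X) ≫ (d.K.map (d.η.app (d.C.obj X)) ≫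
          d.ε.app (d.K.obj (d.C.obj X))) ≫ d.Q.map (d.K.map (d.η.app X)) ≫
          d.Q.map (d.ε.app (d.K.obj X))
        = (d.θ110.app (d.C.obj X) ≫ d.K.map (d.η.app (d.C.obj X)) ≫
            d.ε.app (d.K.obj (d.C.obj X))) ≫ d.Q.map (d.K.map (d.η.app X)) ≫
            d.Q.map (d.ε.app (d.K.obj X)) := by simp [Category.assoc]
      _ = d.θ111.app (d.C.obj X) ≫ d.Q.map (d.K.map (d.η.app X)) ≫
            d.Q.map (d.ε.app (d.K.obj X)) := by rw [← h6]
      _ = (d.θ111.app (d.C.obj X) ≫ (d.K ⋙ d.Q).map (d.η.app X)) ≫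
            d.Q.map (d.ε.app (d.K.obj X)) := by simp [Functor.comp_map]
      _ = (d.K.map (d.η.app X) ≫ d.θ111.app (G.obj (d.K.obj X))) ≫
            d.Q.map (d.ε.app (d.K.obj X)) := by rw [← hnat]; rfl
      _ = d.K.map (d.η.app X) ≫ d.ε.app (d.K.obj X) ≫ d.θ011.app (d.K.obj X) := by
            rw [Category.assoc, h14]
      _ = (d.K.map (d.η.app X) ≫ d.ε.app (d.K.obj X)) ≫ d.θ011.app (d.K.obj X) := by
            simp
end

section
/- Let a split colax coalgebra datum for the comma 2-comonad on G : 𝒜 ⥤ 𝒳 be given. Then there is a lifting of K to the Eilenberg–Moore categories of coalgebras: the assignment sending a coalgebra (X, x : X ⟶ C(X)) of the comonad (C, θ¹⁰⁰, ζ¹) to the pair (K(X), ε_{K X} ∘ K(η_X) ∘ K(x) : K(X) ⟶ Q(K(X))), and a coalgebra morphism f to K(f), is a well-defined functor from the category of coalgebras of (C, θ¹⁰⁰, ζ¹) to the category of coalgebras of (Q, θ⁰¹¹, ζ⁰); in particular (K(X), ε_{K X} ∘ K(η_X) ∘ K(x)) is a Q-coalgebra. Moreover this functor followed by the forgetful functor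 to 𝒜 equals the forgetful functor to 𝒳 followed by K. (Theorem 'EMKlifing'.) -/
open CategoryTheory

universe v₁ v₂ u₁ u₂

variable {𝒜 : Type u₁} {𝒳 : Type u₂} [Category.{v₁} 𝒜] [Category.{v₂} 𝒳]

/-- The `Q`-coalgebra structure morphism on `K X` induced by a `C`-coalgebra `(X, x)`:
`ε_{K X} ∘ K(η_X) ∘ K(x)`. -/
def liftedCoalgStr {G : 𝒜 ⥤ 𝒳} (d : ColaxDatum G) (c : Comonad.Coalgebra d.comonadC) :
    d.K.obj c.A ⟶ d.Q.obj (d.K.obj c.A) :=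
  d.K.map c.a ≫ d.K.map (d.η.app c.A) ≫ d.ε.app (d.K.obj c.A)

lemma lift_counit {G : 𝒜 ⥤ 𝒳} (d : ColaxDatum G)
    (split2 : ∀ X : 𝒳,
      d.K.map (d.η.app X) ≫ d.ε.app (d.K.obj X) ≫ d.ζ0.app (d.K.obj X)
        = d.K.map (d.ζ1.app X))
    (c : Comonad.Coalgebra d.comonadC) :
    liftedCoalgStr d c ≫ d.ζ0.app (d.K.obj c.A) = 𝟙 (d.K.obj c.A) := by
  have hc : c.a ≫ d.ζ1.app c.A = 𝟙 c.A := c.counit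
  unfold liftedCoalgStr
  simp only [Category.assoc]
  erw [split2, ← d.K.map_comp, hc, d.K.map_id]

lemma lift_coassoc {G : 𝒜 ⥤ 𝒳} (d : ColaxDatum G)
    (split1 : ∀ X : 𝒳, d.K.map (d.θ100.app X) = d.θ110.app (d.C.obj X))
    (c : Comonad.Coalgebra d.comonadC) :
    liftedCoalgStr d c ≫ d.θ011.app (d.K.obj c.A)
      = liftedCoalgStr d c ≫ d.Q.map (liftedCoalgStr d c) := by
  have h2 : d.K.map (d.η.app c.A) ≫ d.θ111.app (G.obj (d.K.obj c.A))
      = d.θ111.app (d.C.obj c.A) ≫ d.Q.map (d.K.map (d.η.app c.A)) :=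
    d.θ111.naturality (d.η.app c.A)
  have h3 : d.θ111.app (d.C.obj c.A)
      = d.K.map (d.θ100.app c.A) ≫ d.K.map (d.η.app (d.C.obj c.A)) ≫
          d.ε.app (d.K.obj (d.C.obj c.A)) := by
    rw [d.eq6, ← split1]
  have h4 : c.a ≫ d.θ100.app c.A = c.a ≫ d.C.map c.a := c.coassoc
  have h4' : d.K.map c.a ≫ d.K.map (d.θ100.app c.A)
      = d.K.map c.a ≫ d.K.map (d.C.map c.a) := by
    erw [← d.K.map_comp, ← d.K.map_comp, h4]
    rfl
  have h5 : d.K.map (d.C.map c.a) ≫ d.K.map (d.η.app (d.C.obj c.A))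
      = d.K.map (d.η.app c.A) ≫ d.K.map (G.map (d.K.map c.a)) := by
    erw [← d.K.map_comp, ← d.K.map_comp]
    exact congrArg d.K.map (d.η.naturality c.a)
  have h6 : d.K.map (G.map (d.K.map c.a)) ≫ d.ε.app (d.K.obj (d.C.obj c.A))
      = d.ε.app (d.K.obj c.A) ≫ d.Q.map (d.K.map c.a) :=
    d.ε.naturality (d.K.map c.a)
  unfold liftedCoalgStr
  simp only [Functor.map_comp, Category.assoc]
  erw [← d.eq14, reassoc_of% h2, h3]
  simp only [Category.assoc]
  erw [reassoc_of% h4', Category.assoc, reassoc_of% h5, Category.assoc,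
    ← Category.assoc (d.K.map (G.map (d.K.map c.a))), h6, Category.assoc]
  rfl

lemma lift_hom {G : 𝒜 ⥤ 𝒳} (d : ColaxDatum G)
    {c c' : Comonad.Coalgebra d.comonadC} (f : c ⟶ c') :
    liftedCoalgStr d c ≫ d.Q.map (d.K.map f.f)
      = d.K.map f.f ≫ liftedCoalgStr d c' := by
  have hf : c.a ≫ d.C.map f.f = f.f ≫ c'.a := f.h
  have h1 : d.K.map f.f ≫ d.K.map c'.a
      = d.K.map c.a ≫ d.K.map (d.C.map f.f) := by
    erw [← d.K.map_comp, ← d.K.map_comp, ← hf]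
    rfl
  have h2 : d.K.map (d.C.map f.f) ≫ d.K.map (d.η.app c'.A)
      = d.K.map (d.η.app c.A) ≫ d.K.map (G.map (d.K.map f.f)) := by
    rw [← d.K.map_comp, ← d.K.map_comp]
    exact congrArg d.K.map (d.η.naturality f.f)
  have h3 : d.K.map (G.map (d.K.map f.f)) ≫ d.ε.app (d.K.obj c'.A)
      = d.ε.app (d.K.obj c.A) ≫ d.Q.map (d.K.map f.f) :=
    d.ε.naturality (d.K.map f.f)
  unfold liftedCoalgStr
  simp only [Category.assoc]
  erw [reassoc_of% h1, Category.assoc, reassoc_of% h2, h3]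
  rfl

/-- The lifted functor between Eilenberg–Moore categories. -/
def liftF {G : 𝒜 ⥤ 𝒳} (d : ColaxDatum G)
    (split1 : ∀ X : 𝒳, d.K.map (d.θ100.app X) = d.θ110.app (d.C.obj X))
    (split2 : ∀ X : 𝒳,
      d.K.map (d.η.app X) ≫ d.ε.app (d.K.obj X) ≫ d.ζ0.app (d.K.obj X)
        = d.K.map (d.ζ1.app X)) :
    Comonad.Coalgebra d.comonadC ⥤ Comonad.Coalgebra d.comonadQ where
  obj c :=
    { A := d.K.obj c.A
      a := liftedCoalgStr d c
      counit := lift_counit d split2 c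
      coassoc := lift_coassoc d split1 c }
  map f :=
    { f := d.K.map f.f
      h := lift_hom d f }
  map_id c := by
    apply Comonad.Coalgebra.Hom.ext
    exact d.K.map_id _
  map_comp f g := by
    apply Comonad.Coalgebra.Hom.ext
    exact d.K.map_comp _ _

/-- Theorem `EMKlifing`: for a split colax coalgebra datum, `K` lifts to a functor between
the Eilenberg–Moore categories of coalgebras, commuting with the forgetful functors. -/
theorem K_eilenbergMoore_lifting (G : 𝒜 ⥤ 𝒳) (d : ColaxDatum G)
    (split1 : ∀ X : 𝒳, d.K.map (d.θ100.app X) = d.θ110.app (d.C.obj X))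
    (split2 : ∀ X : 𝒳,
      d.K.map (d.η.app X) ≫ d.ε.app (d.K.obj X) ≫ d.ζ0.app (d.K.obj X)
        = d.K.map (d.ζ1.app X)) :
    -- `(K X, ε_{K X} ∘ K(η_X) ∘ K(x))` is a `Q`-coalgebra:
    (∀ c : Comonad.Coalgebra d.comonadC,
      liftedCoalgStr d c ≫ d.ζ0.app (d.K.obj c.A) = 𝟙 (d.K.obj c.A) ∧
      liftedCoalgStr d c ≫ d.θ011.app (d.K.obj c.A)
        = liftedCoalgStr d c ≫ d.Q.map (liftedCoalgStr d c)) ∧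
    -- the lifting is a functor commuting with the forgetful functors:
    ∃ F : Comonad.Coalgebra d.comonadC ⥤ Comonad.Coalgebra d.comonadQ,
      ∃ hA : ∀ c : Comonad.Coalgebra d.comonadC, (F.obj c).A = d.K.obj c.A,
        (∀ c : Comonad.Coalgebra d.comonadC,
          (F.obj c).a = eqToHom (hA c) ≫ liftedCoalgStr d c ≫
            eqToHom (congrArg d.Q.obj (hA c)).symm) ∧
        (∀ {c c' : Comonad.Coalgebra d.comonadC} (f : c ⟶ c'),
          (F.map f).f = eqToHom (hA c) ≫ d.K.map f.f ≫ eqToHom (hA c').symm) ∧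
        F ⋙ Comonad.forget d.comonadQ = Comonad.forget d.comonadC ⋙ d.K := by
  refine ⟨fun c => ⟨lift_counit d split2 c, lift_coassoc d split1 c⟩,
    liftF d split1 split2, fun c => rfl, fun c => by simp [liftF]; exact (Category.id_comp _).symm,
    fun f => by simp [liftF]; exact (Category.id_comp _).symm, rfl⟩
end

section
/- Let a strictly normal colax coalgebra datum for the comma 2-comonad on G : 𝒜 ⥤ 𝒳 be given (so C = 𝟭 𝒳, Q = 𝟭 𝒜, ζ¹ and ζ⁰ are identities, and the normality equations hold). Then for all objects X of 𝒳 and A of 𝒜: θ¹⁰⁰_X, θ¹¹⁰_X, θ¹¹¹_X, θ⁰⁰⁰_A, θ⁰⁰¹_A and θ⁰¹¹_A are identity morphisms; ε_{K X} ∘ K(η_X) = 𝟙_{K X}, so that together with G(ε_A) ∘ η_{G A} = 𝟙_{G A} the functor K is left adjoint to G with unit η : 𝟭 𝒳 ⟶ K ⋙ G and counit ε : G ⋙ K ⟶ 𝟭 𝒜; ω_A ∘ χ_A = 𝟙_{H A}, so that χ and ω are mutually inverse natural isomorphisms between H and G; θ¹⁰¹_X = ω_{K X} ∘ η_X; η_{H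 A} = G(θ⁰¹⁰_A) ∘ χ_A; and ε_A ∘ K(χ_A) ∘ θ⁰¹⁰_A = 𝟙_A. (This is the analysis of Theorem 'strictnormalcolaxcoalgebra'.) -/
open CategoryTheory

universe v₁ v₂ u₁ u₂

variable {𝒜 : Type u₁} {𝒳 : Type u₂} [Category.{v₁} 𝒜] [Category.{v₂} 𝒳]

theorem strictly_normal_colax_coalgebra_analysis_general
    (G : 𝒜 ⥤ 𝒳) (K : 𝒳 ⥤ 𝒜) (H : 𝒜 ⥤ 𝒳)
    (η : 𝟭 𝒳 ⟶ K ⋙ G) (χ : H ⟶ G) (ω : G ⟶ H) (ε : G ⋙ K ⟶ 𝟭 𝒜)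
    (ζ1 : 𝟭 𝒳 ⟶ 𝟭 𝒳) (ζ0 : 𝟭 𝒜 ⟶ 𝟭 𝒜)
    (θ100 : 𝟭 𝒳 ⟶ 𝟭 𝒳) (θ101 : 𝟭 𝒳 ⟶ K ⋙ H) (θ110 : K ⟶ K) (θ111 : K ⟶ K)
    (θ000 : H ⟶ H) (θ001 : H ⟶ H) (θ010 : 𝟭 𝒜 ⟶ H ⋙ K) (θ011 : 𝟭 𝒜 ⟶ 𝟭 𝒜)
    -- strict normality: the counits are identities and the normality equations hold
    (hζ1 : ∀ X : 𝒳, ζ1.app X = 𝟙 X)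
    (hζ0 : ∀ A : 𝒜, ζ0.app A = 𝟙 A)
    (norm1 : ∀ A : 𝒜, η.app (G.obj A) ≫ G.map (ε.app A) = 𝟙 (G.obj A))
    -- the component equations of a colax coalgebra datum, with `C = 𝟭 𝒳`, `Q = 𝟭 𝒜`
    (eq5 : ∀ X : 𝒳, θ101.app X = θ100.app X ≫ η.app X ≫ ω.app (K.obj X))
    (eq6 : ∀ X : 𝒳, θ111.app X = θ110.app X ≫ K.map (η.app X) ≫ ε.app (K.obj X))
    (eq7 : ∀ A : 𝒜, θ000.app A ≫ η.app (H.obj A) = χ.app A ≫ G.map (θ010.app A))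
    (eq9 : ∀ A : 𝒜, θ001.app A = θ000.app A ≫ χ.app A ≫ ω.app A)
    (eq10 : ∀ A : 𝒜, θ011.app A = θ010.app A ≫ K.map (χ.app A) ≫ ε.app A)
    (eq15 : ∀ X : 𝒳, θ100.app X ≫ ζ1.app X = 𝟙 X)
    (eq16 : ∀ X : 𝒳, θ110.app X ≫ K.map (ζ1.app X) = 𝟙 (K.obj X))
    (eq17 : ∀ A : 𝒜, θ001.app A ≫ H.map (ζ0.app A) = 𝟙 (H.obj A))
    (eq18 : ∀ A : 𝒜, θ011.app A ≫ ζ0.app A = 𝟙 A)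
    (eq20 : ∀ X : 𝒳, θ111.app X ≫ ζ0.app (K.obj X) = 𝟙 (K.obj X))
    (eq21 : ∀ A : 𝒜, θ000.app A ≫ ζ1.app (H.obj A) = 𝟙 (H.obj A)) :
    -- the θ-components are identities:
    (∀ X : 𝒳, θ100.app X = 𝟙 X) ∧
    (∀ X : 𝒳, θ110.app X = 𝟙 (K.obj X)) ∧
    (∀ X : 𝒳, θ111.app X = 𝟙 (K.obj X)) ∧
    (∀ A : 𝒜, θ000.app A = 𝟙 (H.obj A)) ∧
    (∀ A : 𝒜, θ001.app A = 𝟙 (H.obj A)) ∧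
    (∀ A : 𝒜, θ011.app A = 𝟙 A) ∧
    -- the second triangle identity, so that `K ⊣ G` with unit `η` and counit `ε`:
    (∀ X : 𝒳, K.map (η.app X) ≫ ε.app (K.obj X) = 𝟙 (K.obj X)) ∧
    (∃ adj : K ⊣ G, adj.unit = η ∧ adj.counit = ε) ∧
    -- `χ` and `ω` are mutually inverse natural isomorphisms between `H` and `G`:
    (∀ A : 𝒜, χ.app A ≫ ω.app A = 𝟙 (H.obj A)) ∧
    -- the remaining structure is determined:
    (∀ X : 𝒳, θ101.app X = η.app X ≫ ω.app (K.obj X)) ∧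
    (∀ A : 𝒜, η.app (H.obj A) = χ.app A ≫ G.map (θ010.app A)) ∧
    (∀ A : 𝒜, θ010.app A ≫ K.map (χ.app A) ≫ ε.app A = 𝟙 A) := by
  have h100 : ∀ X, θ100.app X = 𝟙 X := fun X => by simpa [hζ1] using eq15 X
  have h110 : ∀ X, θ110.app X = 𝟙 (K.obj X) := fun X => by simpa [hζ1] using eq16 X
  have h111 : ∀ X, θ111.app X = 𝟙 (K.obj X) := fun X => by simpa [hζ0] using eq20 X
  have h000 : ∀ A, θ000.app A = 𝟙 (H.obj A) := fun A => by simpa [hζ1] using eq21 A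
  have h001 : ∀ A, θ001.app A = 𝟙 (H.obj A) := fun A => by simpa [hζ0] using eq17 A
  have h011 : ∀ A, θ011.app A = 𝟙 A := fun A => by simpa [hζ0] using eq18 A
  have triangle : ∀ X, K.map (η.app X) ≫ ε.app (K.obj X) = 𝟙 (K.obj X) := fun X => by
    simpa [h110, h111] using (eq6 X).symm
  refine ⟨h100, h110, h111, h000, h001, h011, triangle, ⟨⟨η, ε, triangle, norm1⟩, rfl, rfl⟩,
    fun A => ?_, fun X => ?_, fun A => ?_, fun A => ?_⟩
  · simpa [h000, h001] using (eq9 A).symm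
  · simpa [h100] using eq5 X
  · simpa [h000] using eq7 A
  · simpa [h011] using (eq10 A).symm

/-- Theorem `strictnormalcolaxcoalgebra` (analysis): a strictly normal colax coalgebra
datum for the comma 2-comonad on `G` (so `C = 𝟭 𝒳`, `Q = 𝟭 𝒜`, `ζ¹`, `ζ⁰` identities and
the normality equations hold) forces the `θ`-components to be identities, exhibits `K` as
a left adjoint of `G` with unit `η` and counit `ε`, makes `χ` and `ω` mutually inverse,
and determines `θ¹⁰¹`, `θ⁰¹⁰` as stated. -/
theorem strictly_normal_colax_coalgebra_analysis
    (G : 𝒜 ⥤ 𝒳) (K : 𝒳 ⥤ 𝒜) (H : 𝒜 ⥤ 𝒳)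
    (η : 𝟭 𝒳 ⟶ K ⋙ G) (χ : H ⟶ G) (ω : G ⟶ H) (ε : G ⋙ K ⟶ 𝟭 𝒜)
    (ζ1 : 𝟭 𝒳 ⟶ 𝟭 𝒳) (ζ0 : 𝟭 𝒜 ⟶ 𝟭 𝒜)
    (θ100 : 𝟭 𝒳 ⟶ 𝟭 𝒳) (θ101 : 𝟭 𝒳 ⟶ K ⋙ H) (θ110 : K ⟶ K) (θ111 : K ⟶ K)
    (θ000 : H ⟶ H) (θ001 : H ⟶ H) (θ010 : 𝟭 𝒜 ⟶ H ⋙ K) (θ011 : 𝟭 𝒜 ⟶ 𝟭 𝒜)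
    -- strict normality: the counits are identities and the normality equations hold
    (hζ1 : ∀ X : 𝒳, ζ1.app X = 𝟙 X)
    (hζ0 : ∀ A : 𝒜, ζ0.app A = 𝟙 A)
    (norm1 : ∀ A : 𝒜, η.app (G.obj A) ≫ G.map (ε.app A) = 𝟙 (G.obj A))
    (norm2 : ∀ A : 𝒜, ω.app A ≫ χ.app A = 𝟙 (G.obj A))
    -- the component equations of a colax coalgebra datum, with `C = 𝟭 𝒳`, `Q = 𝟭 𝒜`
    (eq1 : ∀ A : 𝒜, ω.app A ≫ χ.app A = η.app (G.obj A) ≫ G.map (ε.app A))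
    (eq2 : ∀ A : 𝒜, ω.app A ≫ χ.app A ≫ G.map (ζ0.app A) = ζ1.app (G.obj A))
    (eq3 : ∀ X : 𝒳, θ100.app X ≫ η.app X = η.app X ≫ G.map (θ110.app X))
    (eq4 : ∀ X : 𝒳, θ101.app X ≫ χ.app (K.obj X) = η.app X ≫ G.map (θ111.app X))
    (eq5 : ∀ X : 𝒳, θ101.app X = θ100.app X ≫ η.app X ≫ ω.app (K.obj X))
    (eq6 : ∀ X : 𝒳, θ111.app X = θ110.app X ≫ K.map (η.app X) ≫ ε.app (K.obj X))
    (eq7 : ∀ A : 𝒜, θ000.app A ≫ η.app (H.obj A) = χ.app A ≫ G.map (θ010.app A))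
    (eq8 : ∀ A : 𝒜, θ001.app A ≫ χ.app A = χ.app A ≫ G.map (θ011.app A))
    (eq9 : ∀ A : 𝒜, θ001.app A = θ000.app A ≫ χ.app A ≫ ω.app A)
    (eq10 : ∀ A : 𝒜, θ011.app A = θ010.app A ≫ K.map (χ.app A) ≫ ε.app A)
    (eq11 : ∀ A : 𝒜, θ100.app (G.obj A) ≫ ω.app A = ω.app A ≫ θ000.app A)
    (eq12 : ∀ A : 𝒜, θ110.app (G.obj A) ≫ K.map (ω.app A) = ε.app A ≫ θ010.app A)
    (eq13 : ∀ A : 𝒜, θ101.app (G.obj A) ≫ H.map (ε.app A) = ω.app A ≫ θ001.app A)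
    (eq14 : ∀ A : 𝒜, θ111.app (G.obj A) ≫ ε.app A = ε.app A ≫ θ011.app A)
    (eq15 : ∀ X : 𝒳, θ100.app X ≫ ζ1.app X = 𝟙 X)
    (eq16 : ∀ X : 𝒳, θ110.app X ≫ K.map (ζ1.app X) = 𝟙 (K.obj X))
    (eq17 : ∀ A : 𝒜, θ001.app A ≫ H.map (ζ0.app A) = 𝟙 (H.obj A))
    (eq18 : ∀ A : 𝒜, θ011.app A ≫ ζ0.app A = 𝟙 A)
    (eq19 : ∀ X : 𝒳, θ100.app X ≫ ζ1.app X = 𝟙 X)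
    (eq20 : ∀ X : 𝒳, θ111.app X ≫ ζ0.app (K.obj X) = 𝟙 (K.obj X))
    (eq21 : ∀ A : 𝒜, θ000.app A ≫ ζ1.app (H.obj A) = 𝟙 (H.obj A))
    (eq22 : ∀ A : 𝒜, θ011.app A ≫ ζ0.app A = 𝟙 A)
    (eq24 : ∀ X : 𝒳, θ100.app X ≫ θ101.app X = θ101.app X ≫ θ000.app (K.obj X))
    (eq25 : ∀ X : 𝒳, θ101.app X ≫ H.map (θ110.app X) = θ100.app X ≫ θ101.app X)
    (eq26 : ∀ X : 𝒳, θ101.app X ≫ H.map (θ111.app X) = θ101.app X ≫ θ001.app (K.obj X))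
    (eq27 : ∀ X : 𝒳, θ111.app X ≫ θ110.app X = θ110.app X ≫ θ111.app X)
    (eq28 : ∀ X : 𝒳, θ111.app X ≫ θ111.app X = θ111.app X ≫ θ011.app (K.obj X))
    (eq29 : ∀ X : 𝒳, θ110.app X ≫ K.map (θ100.app X) = θ110.app X ≫ θ110.app X)
    (eq30 : ∀ X : 𝒳, θ110.app X ≫ K.map (θ101.app X) = θ111.app X ≫ θ010.app (K.obj X))
    (eq31 : ∀ A : 𝒜, θ000.app A ≫ θ000.app A = θ000.app A ≫ θ100.app (H.obj A))
    (eq32 : ∀ A : 𝒜, θ000.app A ≫ θ001.app A = θ001.app A ≫ θ000.app A)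
    (eq33 : ∀ A : 𝒜, θ001.app A ≫ H.map (θ010.app A) = θ000.app A ≫ θ101.app (H.obj A))
    (eq34 : ∀ A : 𝒜, θ001.app A ≫ H.map (θ011.app A) = θ001.app A ≫ θ001.app A)
    (eq35 : ∀ A : 𝒜, θ011.app A ≫ θ010.app A = θ010.app A ≫ θ111.app (H.obj A))
    (eq37 : ∀ A : 𝒜, θ010.app A ≫ K.map (θ000.app A) = θ010.app A ≫ θ110.app (H.obj A))
    (eq38 : ∀ A : 𝒜, θ010.app A ≫ K.map (θ001.app A) = θ011.app A ≫ θ010.app A) :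
    -- the θ-components are identities:
    (∀ X : 𝒳, θ100.app X = 𝟙 X) ∧
    (∀ X : 𝒳, θ110.app X = 𝟙 (K.obj X)) ∧
    (∀ X : 𝒳, θ111.app X = 𝟙 (K.obj X)) ∧
    (∀ A : 𝒜, θ000.app A = 𝟙 (H.obj A)) ∧
    (∀ A : 𝒜, θ001.app A = 𝟙 (H.obj A)) ∧
    (∀ A : 𝒜, θ011.app A = 𝟙 A) ∧
    -- the second triangle identity, so that `K ⊣ G` with unit `η` and counit `ε`:
    (∀ X : 𝒳, K.map (η.app X) ≫ ε.app (K.obj X) = 𝟙 (K.obj X)) ∧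
    (∃ adj : K ⊣ G, adj.unit = η ∧ adj.counit = ε) ∧
    -- `χ` and `ω` are mutually inverse natural isomorphisms between `H` and `G`:
    (∀ A : 𝒜, χ.app A ≫ ω.app A = 𝟙 (H.obj A)) ∧
    -- the remaining structure is determined:
    (∀ X : 𝒳, θ101.app X = η.app X ≫ ω.app (K.obj X)) ∧
    (∀ A : 𝒜, η.app (H.obj A) = χ.app A ≫ G.map (θ010.app A)) ∧
    (∀ A : 𝒜, θ010.app A ≫ K.map (χ.app A) ≫ ε.app A = 𝟙 A) :=
  strictly_normal_colax_coalgebra_analysis_general G K H η χ ω ε ζ1 ζ0 θ100 θ101 θ110 θ111 θ000 θ001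
    θ010 θ011 hζ1 hζ0 norm1 eq5 eq6 eq7 eq9 eq10 eq15 eq16 eq17 eq18 eq20 eq21
end

section
/- Given a colax coalgebra datum for the comma 2-comonad on G : 𝒜 ⥤ 𝒳, there is a functor from the comma category Comma (𝟭 𝒳) G to the arrow category Arrow (Comma (𝟭 𝒳) G) which sends an object (X, f : X ⟶ G(A), A) to the arrow from the comma object (C(X), η_X, K(X)) to the comma object (H(A), χ_A, Q(A)) whose components are (ω_A ∘ C(f), ε_A ∘ K(f)), and which sends a comma morphism (x, a) : (X, f, A) ⟶ (X', f', A') to the pair of comma morphisms ((C(x), K(x)), (H(a), Q(a))). In particular, for every (X, f, A), the pair (ω_A ∘ C(f), ε_A ∘ K(f)) is a well-defined morphism (C(X), η_X, K(X)) ⟶ (H(A), χ_A, Q(A)) in Comma (𝟭 𝒳) G, i.e., χ_A ∘ ω_A ∘ C(f) = G(ε_A ∘ K(f)) ∘ η_X. (This is the functor D(F_G) underlying a colax coalgebra, from equations (DFGob) and (DFG) of the paper.) -/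
open CategoryTheory

universe v₁ v₂ u₁ u₂

variable {𝒜 : Type u₁} {𝒳 : Type u₂} [Category.{v₁} 𝒜] [Category.{v₂} 𝒳]

section

variable (G : 𝒜 ⥤ 𝒳) (C : 𝒳 ⥤ 𝒳) (K : 𝒳 ⥤ 𝒜) (H : 𝒜 ⥤ 𝒳) (Q : 𝒜 ⥤ 𝒜)
  (η : C ⟶ K ⋙ G) (χ : H ⟶ Q ⋙ G) (ω : G ⋙ C ⟶ H) (ε : G ⋙ K ⟶ Q)

/-- Well-definedness of the comma morphism `(ω_A ∘ C(f), ε_A ∘ K(f))`. -/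
theorem DFG_w
    (eq1 : ∀ A : 𝒜, ω.app A ≫ χ.app A = η.app (G.obj A) ≫ G.map (ε.app A))
    (c : Comma (𝟭 𝒳) G) :
    C.map c.hom ≫ ω.app c.right ≫ χ.app c.right
      = η.app c.left ≫ G.map (K.map c.hom ≫ ε.app c.right) := by
  rw [eq1, ← Category.assoc, η.naturality c.hom, Category.assoc, G.map_comp]
  rfl

/-- Object part of the functor `D(F_G)`: the arrow
`(C X, η_X, K X) ⟶ (H A, χ_A, Q A)` with components `(ω_A ∘ C(f), ε_A ∘ K(f))`. -/
def DFGobj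
    (eq1 : ∀ A : 𝒜, ω.app A ≫ χ.app A = η.app (G.obj A) ≫ G.map (ε.app A))
    (c : Comma (𝟭 𝒳) G) : Arrow (Comma (𝟭 𝒳) G) :=
  Arrow.mk
    (X := ⟨C.obj c.left, K.obj c.left, η.app c.left⟩)
    (Y := ⟨H.obj c.right, Q.obj c.right, χ.app c.right⟩)
    { left := C.map c.hom ≫ ω.app c.right
      right := K.map c.hom ≫ ε.app c.right
      w := by simpa using DFG_w G C K H Q η χ ω ε eq1 c }

/-- Morphism part of the functor `D(F_G)`: the pair of comma morphisms
`((C x, K x), (H a, Q a))`. -/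
def DFGmap
    (eq1 : ∀ A : 𝒜, ω.app A ≫ χ.app A = η.app (G.obj A) ≫ G.map (ε.app A))
    {c c' : Comma (𝟭 𝒳) G} (φ : c ⟶ c') :
    DFGobj G C K H Q η χ ω ε eq1 c ⟶ DFGobj G C K H Q η χ ω ε eq1 c' where
  left :=
    { left := C.map φ.left
      right := K.map φ.left
      w := by simp [DFGobj, Arrow.mk] }
  right :=
    { left := H.map φ.right
      right := Q.map φ.right
      w := by simp [DFGobj, Arrow.mk] }
  w := by
    have hw := φ.w
    dsimp at hw
    ext
    · dsimp [DFGobj]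
      rw [← Category.assoc, ← C.map_comp, hw, C.map_comp, Category.assoc, Category.assoc]
      congr 1
      exact ω.naturality φ.right
    · dsimp [DFGobj]
      rw [← Category.assoc, ← K.map_comp, hw, K.map_comp, Category.assoc, Category.assoc]
      congr 1
      exact ε.naturality φ.right

/-- The functor `D(F_G) : Comma (𝟭 𝒳) G ⥤ Arrow (Comma (𝟭 𝒳) G)` underlying a colax
coalgebra, together with the well-definedness of its components. -/
theorem DFG_functor_exists
    (eq1 : ∀ A : 𝒜, ω.app A ≫ χ.app A = η.app (G.obj A) ≫ G.map (ε.app A)) :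
    (∀ c : Comma (𝟭 𝒳) G,
      C.map c.hom ≫ ω.app c.right ≫ χ.app c.right
        = η.app c.left ≫ G.map (K.map c.hom ≫ ε.app c.right)) ∧
    ∃ T : Comma (𝟭 𝒳) G ⥤ Arrow (Comma (𝟭 𝒳) G),
      ∃ hobj : ∀ c : Comma (𝟭 𝒳) G, T.obj c = DFGobj G C K H Q η χ ω ε eq1 c,
        ∀ {c c' : Comma (𝟭 𝒳) G} (φ : c ⟶ c'),
          T.map φ = eqToHom (hobj c) ≫ DFGmap G C K H Q η χ ω ε eq1 φ ≫
            eqToHom (hobj c').symm := by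
  refine ⟨fun c => DFG_w G C K H Q η χ ω ε eq1 c, ?_⟩
  refine ⟨{ obj := DFGobj G C K H Q η χ ω ε eq1
            map := DFGmap G C K H Q η χ ω ε eq1
            map_id := ?_
            map_comp := ?_ }, fun _ => rfl, fun φ => by simp⟩
  · intro c
    apply CommaMorphism.ext <;> apply CommaMorphism.ext <;>
      simp [DFGmap, DFGobj]
  · intro c c' c'' f g
    apply CommaMorphism.ext <;> apply CommaMorphism.ext <;>
      simp [DFGmap, DFGobj] <;> rfl

end
end
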